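/- arXiv:1611.06119 — 6 statements merged into one kernel-verified Lean document; each statement's English description precedes it below -/
import Mathlib

section
/- For every t > 0, the second moment of the explicit solution u(t,·) is finite and is given by ∫_ℝ x² u(t,x) dx = σ tanh(2σt) + (cosh(2σt))^{-2} · (∫_ℝ e^{-tanh(2σt)y²/(2σ)} y² u₀(y) dy) / (∫_ℝ e^{-tanh(2σt)y²/(2σ)} u₀(y) dy). In particular the mean fitness f̄(t) = ∫_ℝ (-x²) u(t,x) dx equals minus this quantity. -/
/-! Completing the square with `tanh² s + cosh⁻² s = 1` (`s = 2σt`) exhibits `u(t, ·)` as a mixture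
of Gaussian densities of variance `σ tanh s` and means `y / cosh s`, mixed by the weight
`e^{-tanh s · y²/(2σ)} u₀(y)` normalised by its (positive) total mass. A Gaussian with mean `m` has
second moment `σ tanh s + m²`, so Fubini gives the formula. -/

open MeasureTheory

/-- The explicit solution of the replicator-mutator equation with fitness `f(x) = -x²`. -/
noncomputable def uSol (σ : ℝ) (u₀ : ℝ → ℝ) (t x : ℝ) : ℝ :=
  (Real.sqrt (2 * Real.pi * σ * Real.tanh (2 * σ * t)))⁻¹
    * Real.exp (-(Real.tanh (2 * σ * t)) * x ^ 2 / (2 * σ))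
    * (∫ y : ℝ, Real.exp (-(x / Real.cosh (2 * σ * t) - y) ^ 2
        / (2 * σ * Real.tanh (2 * σ * t))) * u₀ y)
    / (∫ y : ℝ, Real.exp (-(Real.tanh (2 * σ * t)) * y ^ 2 / (2 * σ)) * u₀ y)

open Real ProbabilityTheory NNReal

theorem Real.tanh_pos_of_pos {x : ℝ} (hx : 0 < x) : 0 < tanh x := by
  rw [tanh_eq_sinh_div_cosh]
  exact div_pos (sinh_pos_iff.mpr hx) (cosh_pos x)

lemma integral_sq_gaussianReal (μ : ℝ) (v : ℝ≥0) : ∫ x, x ^ 2 ∂gaussianReal μ v = v + μ ^ 2 := by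
  have h := variance_eq_sub (memLp_id_gaussianReal (μ := μ) (v := v) 2)
  rw [variance_id_gaussianReal] at h
  simp only [id, Pi.pow_apply] at h
  rw [integral_id_gaussianReal] at h
  linarith

lemma integrable_sq_mul_gaussianPDFReal (μ : ℝ) {v : ℝ≥0} (hv : v ≠ 0) :
    Integrable fun x => x ^ 2 * gaussianPDFReal μ v x := by
  have h := (memLp_id_gaussianReal (μ := μ) (v := v) 2).integrable_sq
  rw [gaussianReal_of_var_ne_zero _ hv, integrable_withDensity_iff_integrable_smul'
    (measurable_gaussianPDF μ v) (ae_of_all _ fun _ => gaussianPDF_lt_top)] at h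
  simpa [toReal_gaussianPDF, mul_comm] using h

lemma integral_sq_mul_gaussianPDFReal (μ : ℝ) {v : ℝ≥0} (hv : v ≠ 0) :
    ∫ x, x ^ 2 * gaussianPDFReal μ v x = v + μ ^ 2 := by
  rw [← integral_sq_gaussianReal, integral_gaussianReal_eq_integral_smul hv]
  simp only [smul_eq_mul, mul_comm]

section GaussianMixture

variable {g : ℝ → ℝ} {v : ℝ≥0}

lemma integrable_prod_sq_mul_gaussianPDFReal_mul (hg : Integrable g)
    (hg₂ : Integrable fun y => y ^ 2 * g y) (a : ℝ) (hv : v ≠ 0) :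
    Integrable (fun p : ℝ × ℝ => p.1 ^ 2 * gaussianPDFReal (a * p.2) v p.1 * g p.2)
      (volume.prod volume) := by
  have hmeas : AEStronglyMeasurable
      (fun p : ℝ × ℝ => p.1 ^ 2 * gaussianPDFReal (a * p.2) v p.1 * g p.2)
      (volume.prod volume) := by
    refine (Continuous.aestronglyMeasurable ?_).mul hg.1.comp_snd
    unfold gaussianPDFReal
    fun_prop
  have hnorm : ∀ y, ∫ x, ‖x ^ 2 * gaussianPDFReal (a * y) v x * g y‖
      = v * ‖g y‖ + a ^ 2 * ‖y ^ 2 * g y‖ := by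
    intro y
    simp only [norm_mul, norm_pow, Real.norm_eq_abs, sq_abs,
      abs_of_nonneg (gaussianPDFReal_nonneg _ _ _)]
    rw [integral_mul_const, integral_sq_mul_gaussianPDFReal _ hv]
    ring
  rw [integrable_prod_iff' hmeas]
  refine ⟨ae_of_all _ fun y => (integrable_sq_mul_gaussianPDFReal (a * y) hv).mul_const (g y), ?_⟩
  simp only [hnorm]
  exact (hg.norm.const_mul _).add (hg₂.norm.const_mul _)

lemma integrable_sq_mul_integral_gaussianPDFReal_mul (hg : Integrable g)
    (hg₂ : Integrable fun y => y ^ 2 * g y) (a : ℝ) (hv : v ≠ 0) :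
    Integrable fun x => x ^ 2 * ∫ y, gaussianPDFReal (a * y) v x * g y := by
  simpa only [← integral_const_mul, mul_assoc] using
    (integrable_prod_sq_mul_gaussianPDFReal_mul hg hg₂ a hv).integral_prod_left

lemma integral_sq_mul_integral_gaussianPDFReal_mul (hg : Integrable g)
    (hg₂ : Integrable fun y => y ^ 2 * g y) (a : ℝ) (hv : v ≠ 0) :
    ∫ x, x ^ 2 * ∫ y, gaussianPDFReal (a * y) v x * g y
      = v * (∫ y, g y) + a ^ 2 * ∫ y, y ^ 2 * g y :=
  calc ∫ x, x ^ 2 * ∫ y, gaussianPDFReal (a * y) v x * g y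
      = ∫ x, ∫ y, x ^ 2 * gaussianPDFReal (a * y) v x * g y := by
        simp only [← integral_const_mul, mul_assoc]
    _ = ∫ y, ∫ x, x ^ 2 * gaussianPDFReal (a * y) v x * g y :=
        integral_integral_swap (integrable_prod_sq_mul_gaussianPDFReal_mul hg hg₂ a hv)
    _ = ∫ y, (v * g y + a ^ 2 * (y ^ 2 * g y)) := by
        congr 1 with y
        rw [integral_mul_const, integral_sq_mul_gaussianPDFReal _ hv]
        ring
    _ = v * (∫ y, g y) + a ^ 2 * ∫ y, y ^ 2 * g y := by
        rw [integral_add (hg.const_mul _) (hg₂.const_mul _), integral_const_mul,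
          integral_const_mul]

end GaussianMixture

section ExpWeight

variable {μ : Measure ℝ} {b : ℝ} {f : ℝ → ℝ}

lemma MeasureTheory.Integrable.exp_neg_mul_sq_mul (hb : 0 ≤ b) (hf : Integrable f μ) :
    Integrable (fun y => exp (-(b * y ^ 2)) * f y) μ :=
  hf.bdd_mul (c := 1) (by fun_prop) <| ae_of_all _ fun y => by
    rw [norm_of_nonneg (exp_pos _).le, exp_le_one_iff, neg_nonpos]
    positivity

lemma MeasureTheory.Integrable.exp_neg_mul_sq_mul_sq_mul (hb : 0 < b) (hf : Integrable f μ) :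
    Integrable (fun y => exp (-(b * y ^ 2)) * y ^ 2 * f y) μ :=
  hf.bdd_mul (c := exp (-1) / b) (by fun_prop) <| ae_of_all _ fun y => by
    rw [norm_of_nonneg (by positivity), le_div_iff₀ hb]
    linarith [mul_exp_neg_le_exp_neg_one (b * y ^ 2)]

end ExpWeight

lemma integral_mul_pos_of_integral_pos {α : Type*} [MeasurableSpace α] {μ : Measure α} {w f : α → ℝ}
    (hw : ∀ x, 0 < w x) (hf : 0 ≤ f) (hwf : Integrable (fun x => w x * f x) μ)
    (h : 0 < ∫ x, f x ∂μ) : 0 < ∫ x, w x * f x ∂μ := by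
  have hsupp : Function.support (fun x => w x * f x) = Function.support f := by
    ext x
    simp [(hw x).ne']
  rw [integral_pos_iff_support_of_nonneg hf (Integrable.of_integral_ne_zero h.ne')] at h
  rwa [integral_pos_iff_support_of_nonneg (fun x => mul_nonneg (hw x).le (hf x)) hwf, hsupp]

lemma exp_mul_exp_eq_gaussianPDFReal_mul {σ s : ℝ} (hσ : 0 < σ) (hs : 0 < s) (x y : ℝ) :
    (√(2 * π * σ * tanh s))⁻¹ * exp (-tanh s * x ^ 2 / (2 * σ))
        * exp (-(x / cosh s - y) ^ 2 / (2 * σ * tanh s))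
      = gaussianPDFReal ((cosh s)⁻¹ * y) (σ * tanh s).toNNReal x
        * exp (-tanh s * y ^ 2 / (2 * σ)) := by
  have hτ := tanh_pos_of_pos hs
  have hc := (cosh_pos s).ne'
  have hsq : tanh s ^ 2 * cosh s ^ 2 + 1 = cosh s ^ 2 := by
    rw [tanh_eq_sinh_div_cosh, div_pow, div_mul_cancel₀ _ (pow_ne_zero 2 hc), cosh_sq']
    ring
  have hexp : -tanh s * x ^ 2 / (2 * σ) + -(x / cosh s - y) ^ 2 / (2 * σ * tanh s)
      = -(x - (cosh s)⁻¹ * y) ^ 2 / (2 * (σ * tanh s)) + -tanh s * y ^ 2 / (2 * σ) := by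
    field_simp
    linear_combination (y ^ 2 - x ^ 2) * hsq
  rw [gaussianPDFReal, coe_toNNReal _ (by positivity), ← mul_assoc (2 * π), mul_assoc, ← exp_add,
    hexp, exp_add]
  ring

lemma uSol_eq_inv_mul_integral_gaussianPDFReal_mul {σ t : ℝ} (hσ : 0 < σ) (ht : 0 < t)
    (u₀ : ℝ → ℝ) :
    uSol σ u₀ t = fun x =>
      (∫ y, exp (-tanh (2 * σ * t) * y ^ 2 / (2 * σ)) * u₀ y)⁻¹
        * ∫ y, gaussianPDFReal ((cosh (2 * σ * t))⁻¹ * y) (σ * tanh (2 * σ * t)).toNNReal x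
          * (exp (-tanh (2 * σ * t) * y ^ 2 / (2 * σ)) * u₀ y) := by
  ext x
  rw [uSol, div_eq_inv_mul, ← integral_const_mul]
  congr 2 with y
  rw [← mul_assoc, exp_mul_exp_eq_gaussianPDFReal_mul hσ (by positivity), mul_assoc]

theorem second_moment_of_explicit_solution_neg_quadratic_general
    (σ : ℝ) (hσ : 0 < σ) (u₀ : ℝ → ℝ)
    (hnn : ∀ x, 0 ≤ u₀ x) (hmass : ∫ y : ℝ, u₀ y = 1)
    (t : ℝ) (ht : 0 < t) :
    Integrable (fun x : ℝ => x ^ 2 * uSol σ u₀ t x) ∧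
    (∫ x : ℝ, x ^ 2 * uSol σ u₀ t x)
      = σ * Real.tanh (2 * σ * t)
        + ((Real.cosh (2 * σ * t)) ^ 2)⁻¹
          * (∫ y : ℝ, Real.exp (-(Real.tanh (2 * σ * t)) * y ^ 2 / (2 * σ)) * y ^ 2 * u₀ y)
          / (∫ y : ℝ, Real.exp (-(Real.tanh (2 * σ * t)) * y ^ 2 / (2 * σ)) * u₀ y) ∧
    (∫ x : ℝ, (-x ^ 2) * uSol σ u₀ t x)
      = -(σ * Real.tanh (2 * σ * t)
        + ((Real.cosh (2 * σ * t)) ^ 2)⁻¹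
          * (∫ y : ℝ, Real.exp (-(Real.tanh (2 * σ * t)) * y ^ 2 / (2 * σ)) * y ^ 2 * u₀ y)
          / (∫ y : ℝ, Real.exp (-(Real.tanh (2 * σ * t)) * y ^ 2 / (2 * σ)) * u₀ y)) := by
  have hneg : (fun x => -x ^ 2 * uSol σ u₀ t x) = fun x => -(x ^ 2 * uSol σ u₀ t x) := by
    ext x; ring
  rw [hneg, integral_neg, neg_inj, and_self, uSol_eq_inv_mul_integral_gaussianPDFReal_mul hσ ht]
  set τ := tanh (2 * σ * t)
  set g : ℝ → ℝ := fun y => exp (-τ * y ^ 2 / (2 * σ)) * u₀ y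
  have hτ : 0 < τ := tanh_pos_of_pos (by positivity)
  have hweight : ∀ y, -τ * y ^ 2 / (2 * σ) = -(τ / (2 * σ) * y ^ 2) := fun y => by ring
  have hu₀ : Integrable u₀ := .of_integral_ne_zero (by simp [hmass])
  have hg : Integrable g := by
    simpa only [g, hweight] using hu₀.exp_neg_mul_sq_mul (b := τ / (2 * σ)) (by positivity)
  have hsq_g : (fun y => exp (-τ * y ^ 2 / (2 * σ)) * y ^ 2 * u₀ y) = fun y => y ^ 2 * g y := by
    ext y; ring
  have hg₂ : Integrable fun y => y ^ 2 * g y := by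
    simpa only [← hsq_g, hweight] using
      hu₀.exp_neg_mul_sq_mul_sq_mul (b := τ / (2 * σ)) (by positivity)
  have hD : 0 < ∫ y, g y :=
    integral_mul_pos_of_integral_pos (fun _ => exp_pos _) hnn hg (by rw [hmass]; exact one_pos)
  have hv : (σ * τ).toNNReal ≠ 0 := by simpa using mul_pos hσ hτ
  have hmoment := integral_sq_mul_integral_gaussianPDFReal_mul hg hg₂ (cosh (2 * σ * t))⁻¹ hv
  rw [coe_toNNReal _ (by positivity)] at hmoment
  simp only [mul_left_comm _ (∫ y, g y)⁻¹, integral_const_mul]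
  refine ⟨(integrable_sq_mul_integral_gaussianPDFReal_mul hg hg₂ _ hv).const_mul _, ?_⟩
  rw [hmoment, hsq_g]
  field_simp

theorem second_moment_of_explicit_solution_neg_quadratic
    (σ : ℝ) (hσ : 0 < σ) (u₀ : ℝ → ℝ) (hmeas : Measurable u₀)
    (hnn : ∀ x, 0 ≤ u₀ x) (hmass : ∫ y : ℝ, u₀ y = 1)
    (t : ℝ) (ht : 0 < t) :
    Integrable (fun x : ℝ => x ^ 2 * uSol σ u₀ t x) ∧
    (∫ x : ℝ, x ^ 2 * uSol σ u₀ t x)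
      = σ * Real.tanh (2 * σ * t)
        + ((Real.cosh (2 * σ * t)) ^ 2)⁻¹
          * (∫ y : ℝ, Real.exp (-(Real.tanh (2 * σ * t)) * y ^ 2 / (2 * σ)) * y ^ 2 * u₀ y)
          / (∫ y : ℝ, Real.exp (-(Real.tanh (2 * σ * t)) * y ^ 2 / (2 * σ)) * u₀ y) ∧
    (∫ x : ℝ, (-x ^ 2) * uSol σ u₀ t x)
      = -(σ * Real.tanh (2 * σ * t)
        + ((Real.cosh (2 * σ * t)) ^ 2)⁻¹
          * (∫ y : ℝ, Real.exp (-(Real.tanh (2 * σ * t)) * y ^ 2 / (2 * σ)) * y ^ 2 * u₀ y)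
          / (∫ y : ℝ, Real.exp (-(Real.tanh (2 * σ * t)) * y ^ 2 / (2 * σ)) * u₀ y)) :=
  second_moment_of_explicit_solution_neg_quadratic_general σ hσ u₀ hnn hmass t ht
end

section
/- For every t > 0, the explicit solution u(t,·) has total mass one: ∫_ℝ u(t,x) dx = 1. -/
/-! Completing the square with `tanh² + cosh⁻² = 1` turns the numerator of `uSol σ u₀ t x` into
`∫ y, gaussianPDFReal (y / cosh (2σt)) (σ tanh (2σt)) x * w y * u₀ y` with the weight
`w y = exp (-tanh (2σt) y² / (2σ))`. Integrating in `x` first (Fubini), each density has mass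
one, so the numerator integrates to the denominator `∫ w u₀`, which is positive since `u₀ ≥ 0`
has mass one. -/

open MeasureTheory

open ProbabilityTheory Real

theorem integral_integral_mul_eq_integral_of_integral_eq_one {α β : Type*}
    [MeasurableSpace α] [MeasurableSpace β] {μ : Measure α} {ν : Measure β}
    [SFinite μ] [SFinite ν] {k : α → β → ℝ} {g : β → ℝ}
    (hk : Measurable (Function.uncurry k)) (hk_nonneg : ∀ x y, 0 ≤ k x y)
    (hk_int : ∀ y, Integrable (k · y) μ) (hk_one : ∀ y, ∫ x, k x y ∂μ = 1)
    (hg : Integrable g ν) :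
    ∫ x, ∫ y, k x y * g y ∂ν ∂μ = ∫ y, g y ∂ν := by
  have h_norm : ∀ y, ∫ x, ‖k x y * g y‖ ∂μ = ‖g y‖ := fun y => by
    simp_rw [norm_mul, Real.norm_of_nonneg (hk_nonneg _ y)]
    rw [integral_mul_const, hk_one, one_mul]
  have h_prod : Integrable (Function.uncurry fun x y => k x y * g y) (μ.prod ν) := by
    refine (integrable_prod_iff' ?_).2 ⟨.of_forall fun y => (hk_int y).mul_const (g y), ?_⟩
    · exact hk.aestronglyMeasurable.mul hg.aestronglyMeasurable.comp_snd
    · simpa only [Function.uncurry_apply_pair, h_norm] using hg.norm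
  rw [integral_integral_swap h_prod]
  simp_rw [integral_mul_const, hk_one, one_mul]

theorem integral_mul_pos_of_pos {α : Type*} [MeasurableSpace α] {μ : Measure α} {w g : α → ℝ}
    (hw : ∀ x, 0 < w x) (hg_nonneg : 0 ≤ g) (hg : Integrable g μ)
    (hwg : Integrable (fun x => w x * g x) μ) (hg_pos : 0 < ∫ x, g x ∂μ) :
    0 < ∫ x, w x * g x ∂μ := by
  have h_supp : Function.support (fun x => w x * g x) = Function.support g := by
    ext x; simp [(hw x).ne']
  rw [integral_pos_iff_support_of_nonneg (fun x => mul_nonneg (hw x).le (hg_nonneg x)) hwg,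
    h_supp, ← integral_pos_iff_support_of_nonneg hg_nonneg hg]
  exact hg_pos

theorem tanh_sq_add_inv_cosh_sq (a : ℝ) : tanh a ^ 2 + (cosh a)⁻¹ ^ 2 = 1 := by
  have := cosh_sq_sub_sinh_sq a
  have := (cosh_pos a).ne'
  rw [tanh_eq_sinh_div_cosh]
  field_simp
  linarith

theorem exp_mul_exp_eq_exp_mul_exp_of_sq_add_inv_sq {σ τ c : ℝ} (hσ : σ ≠ 0) (hτ : τ ≠ 0)
    (h : τ ^ 2 + c⁻¹ ^ 2 = 1) (x y : ℝ) :
    exp (-τ * x ^ 2 / (2 * σ)) * exp (-(x / c - y) ^ 2 / (2 * σ * τ))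
      = exp (-(x - y / c) ^ 2 / (2 * σ * τ)) * exp (-τ * y ^ 2 / (2 * σ)) := by
  rw [← exp_add, ← exp_add]
  congr 1
  rw [div_eq_mul_inv x c, div_eq_mul_inv y c]
  generalize c⁻¹ = d at h ⊢
  field_simp
  linear_combination (y ^ 2 - x ^ 2) * h

theorem mul_integral_exp_eq_integral_gaussianPDFReal_mul {σ τ c : ℝ} (hσ : 0 < σ) (hτ : 0 < τ)
    (h : τ ^ 2 + c⁻¹ ^ 2 = 1) (g : ℝ → ℝ) (x : ℝ) :
    (√(2 * π * σ * τ))⁻¹ * exp (-τ * x ^ 2 / (2 * σ))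
        * ∫ y, exp (-(x / c - y) ^ 2 / (2 * σ * τ)) * g y
      = ∫ y, gaussianPDFReal (y / c) (σ * τ).toNNReal x * (exp (-τ * y ^ 2 / (2 * σ)) * g y) := by
  rw [mul_assoc, ← integral_const_mul, ← integral_const_mul]
  congr 1 with y
  rw [gaussianPDFReal, Real.coe_toNNReal _ (by positivity), ← mul_assoc (2 * π), ← mul_assoc 2 σ]
  linear_combination (√(2 * π * σ * τ))⁻¹ * g y
    * exp_mul_exp_eq_exp_mul_exp_of_sq_add_inv_sq hσ.ne' hτ.ne' h x y

theorem explicit_solution_has_mass_one_neg_quadratic_general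
    (σ : ℝ) (hσ : 0 < σ) (u₀ : ℝ → ℝ)
    (hnn : ∀ x, 0 ≤ u₀ x) (hmass : ∫ y : ℝ, u₀ y = 1)
    (t : ℝ) (ht : 0 < t) :
    ∫ x : ℝ, uSol σ u₀ t x = 1 := by
  have hτ : 0 < tanh (2 * σ * t) := by
    rw [tanh_eq_sinh_div_cosh]
    exact div_pos (sinh_pos_iff.2 (by positivity)) (cosh_pos _)
  set τ := tanh (2 * σ * t)
  set c := cosh (2 * σ * t)
  set w := fun y : ℝ => exp (-τ * y ^ 2 / (2 * σ))
  have hu₀ : Integrable u₀ := .of_integral_ne_zero (hmass ▸ one_ne_zero)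
  have hwu₀ : Integrable (fun y => w y * u₀ y) :=
    hu₀.bdd_mul (c := 1) (by fun_prop) (.of_forall fun y => by
      rw [norm_of_nonneg (exp_pos _).le, exp_le_one_iff, neg_mul, neg_div, neg_nonpos]
      positivity)
  have hD : 0 < ∫ y, w y * u₀ y :=
    integral_mul_pos_of_pos (fun _ => exp_pos _) hnn hu₀ hwu₀ (hmass ▸ one_pos)
  have hστ : (σ * τ).toNNReal ≠ 0 := by simp [hσ, hτ]
  have h_uSol : ∀ x, uSol σ u₀ t x
      = (∫ y, gaussianPDFReal (y / c) (σ * τ).toNNReal x * (w y * u₀ y)) / ∫ y, w y * u₀ y :=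
    fun x => by
      rw [uSol, mul_integral_exp_eq_integral_gaussianPDFReal_mul hσ hτ (tanh_sq_add_inv_cosh_sq _)]
  have hk :
      Measurable (Function.uncurry fun x y => gaussianPDFReal (y / c) (σ * τ).toNNReal x) := by
    simp only [Function.uncurry_def, gaussianPDFReal]
    fun_prop
  simp_rw [h_uSol, integral_div]
  rw [integral_integral_mul_eq_integral_of_integral_eq_one hk
      (fun _ _ => gaussianPDFReal_nonneg _ _ _) (fun _ => integrable_gaussianPDFReal _ _)
      (fun _ => integral_gaussianPDFReal_eq_one _ hστ) hwu₀,
    div_self hD.ne']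

theorem explicit_solution_has_mass_one_neg_quadratic
    (σ : ℝ) (hσ : 0 < σ) (u₀ : ℝ → ℝ) (hmeas : Measurable u₀)
    (hnn : ∀ x, 0 ≤ u₀ x) (hmass : ∫ y : ℝ, u₀ y = 1)
    (t : ℝ) (ht : 0 < t) :
    ∫ x : ℝ, uSol σ u₀ t x = 1 :=
  explicit_solution_has_mass_one_neg_quadratic_general σ hσ u₀ hnn hmass t ht
end

section
/- Propagation of Gaussian initial data for the fitness f(x) = -x²: if u₀(x) = √(a/(2π)) e^{-a(x-m)²/2} with a > 0 and m ∈ ℝ, then for every t > 0 and x ∈ ℝ the explicit solution satisfies u(t,x) = √(a(t)/(2π)) e^{-a(t)(x - m(t))²/2}, where a(t) = (aσ + tanh(2σt)) / (σ(1 + aσ tanh(2σt))) and m(t) = m a σ / (aσ cosh(2σt) + sinh(2σt)). -/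
open MeasureTheory

open MeasureTheory

/-! Both integrals in `uSol` pair a Gaussian kernel with the Gaussian datum, so completing the
square evaluates them in closed form. What remains is an identity between rational expressions in
`tanh`, `cosh` and `sinh` of `2σt`, which holds modulo `cosh² - sinh² = 1`. -/

open Real

theorem integral_exp_neg_mul_sq_mul_exp_neg_mul_sq {p q : ℝ} (hpq : p + q ≠ 0) (α β : ℝ) :
    ∫ y, exp (-(p * (α - y) ^ 2)) * exp (-(q * (y - β) ^ 2))
      = √(π / (p + q)) * exp (-(p * q / (p + q)) * (α - β) ^ 2) := by
  have complete_square : ∀ y, exp (-(p * (α - y) ^ 2)) * exp (-(q * (y - β) ^ 2))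
      = exp (-(p * q / (p + q)) * (α - β) ^ 2)
        * exp (-(p + q) * (y - (p * α + q * β) / (p + q)) ^ 2) := by
    intro y
    rw [← exp_add, ← exp_add]
    congr 1
    field_simp
    ring
  simp_rw [complete_square]
  rw [integral_const_mul, integral_sub_right_eq_self (fun y => exp (-(p + q) * y ^ 2)),
    integral_gaussian, mul_comm]

theorem integral_exp_neg_sq_div_mul_gaussian {v a : ℝ} (hv : 0 < v) (ha : 0 < a) (α m : ℝ) :
    ∫ y, exp (-(α - y) ^ 2 / (2 * v)) * (√(a / (2 * π)) * exp (-a * (y - m) ^ 2 / 2))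
      = √(a * v / (1 + a * v)) * exp (-a * (α - m) ^ 2 / (2 * (1 + a * v))) := by
  calc _ = √(a / (2 * π))
        * ∫ y, exp (-((2 * v)⁻¹ * (α - y) ^ 2)) * exp (-(a / 2 * (y - m) ^ 2)) := by
        rw [← integral_const_mul]
        congr 1 with y
        ring_nf
    _ = _ := by
        rw [integral_exp_neg_mul_sq_mul_exp_neg_mul_sq (by positivity), ← mul_assoc,
          ← sqrt_mul (by positivity)]
        congr 2 <;> field_simp

theorem gaussian_prefactor_eq {σ τ a : ℝ} (hσ : 0 < σ) (hτ : 0 < τ) (ha : 0 < a) :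
    (√(2 * π * σ * τ))⁻¹ * √(a * (σ * τ) / (1 + a * (σ * τ)))
        / √(a * (σ / τ) / (1 + a * (σ / τ)))
      = √((a * σ + τ) / (σ * (1 + a * σ * τ)) / (2 * π)) := by
  rw [← sqrt_inv, ← sqrt_mul (by positivity), ← sqrt_div (by positivity)]
  congr 1
  field_simp
  ring

theorem gaussian_exponent_eq {σ τ a c s : ℝ} (hσ : 0 < σ) (hτ : 0 < τ) (ha : 0 < a)
    (hc : 0 < c) (hs : s = τ * c) (hcs : c ^ 2 - s ^ 2 = 1) (x m : ℝ) :
    -τ * x ^ 2 / (2 * σ) + -a * (x / c - m) ^ 2 / (2 * (1 + a * (σ * τ)))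
        - -a * (0 - m) ^ 2 / (2 * (1 + a * (σ / τ)))
      = -((a * σ + τ) / (σ * (1 + a * σ * τ)))
          * (x - m * a * σ / (a * σ * c + s)) ^ 2 / 2 := by
  subst hs
  field_simp
  linear_combination σ * a * (τ + σ * a) * ((τ + σ * a) * x ^ 2 - σ * a * m ^ 2) * hcs

theorem propagation_of_gaussian_data_neg_quadratic
    (σ : ℝ) (hσ : 0 < σ) (a m : ℝ) (ha : 0 < a) (u₀ : ℝ → ℝ)
    (hu₀ : u₀ = fun x => Real.sqrt (a / (2 * Real.pi)) * Real.exp (-a * (x - m) ^ 2 / 2)) :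
    ∀ t : ℝ, 0 < t → ∀ x : ℝ,
      uSol σ u₀ t x
        = Real.sqrt ((a * σ + Real.tanh (2 * σ * t))
              / (σ * (1 + a * σ * Real.tanh (2 * σ * t))) / (2 * Real.pi))
          * Real.exp (-((a * σ + Real.tanh (2 * σ * t))
              / (σ * (1 + a * σ * Real.tanh (2 * σ * t))))
            * (x - m * a * σ / (a * σ * Real.cosh (2 * σ * t) + Real.sinh (2 * σ * t))) ^ 2
            / 2) := by
  intro t ht x
  subst hu₀
  unfold uSol
  beta_reduce
  have hs : 0 < sinh (2 * σ * t) := sinh_pos_iff.mpr (by positivity)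
  have hc : 0 < cosh (2 * σ * t) := cosh_pos _
  have hs_eq : sinh (2 * σ * t) = tanh (2 * σ * t) * cosh (2 * σ * t) := by
    rw [tanh_eq_sinh_div_cosh, div_mul_cancel₀ _ hc.ne']
  have hτ : 0 < tanh (2 * σ * t) := by rw [tanh_eq_sinh_div_cosh]; positivity
  set τ := tanh (2 * σ * t)
  set c := cosh (2 * σ * t)
  have kernel_num : ∀ y, exp (-(x / c - y) ^ 2 / (2 * σ * τ))
      = exp (-(x / c - y) ^ 2 / (2 * (σ * τ))) := fun y => by ring_nf
  have kernel_den : ∀ y, exp (-τ * y ^ 2 / (2 * σ)) = exp (-(0 - y) ^ 2 / (2 * (σ / τ))) :=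
    fun y => by congr 1; field_simp; ring
  -- under the integral only: the prefactor `exp (-τ * x ^ 2 / (2 * σ))` has the same shape
  conv_lhs => enter [2, 2, y, 1]; rw [kernel_den]
  simp_rw [kernel_num, integral_exp_neg_sq_div_mul_gaussian (mul_pos hσ hτ) ha,
    integral_exp_neg_sq_div_mul_gaussian (div_pos hσ hτ) ha]
  rw [← gaussian_prefactor_eq hσ hτ ha,
    ← gaussian_exponent_eq hσ hτ ha hc hs_eq (cosh_sq_sub_sinh_sq _), exp_sub, exp_add]
  field_simp
end

section
/- Quantitative convergence to the fundamental solution: there exists a constant C > 0, independent of time, such that for all t ≥ 1 and all x ∈ ℝ, |u(t,x) - ψ(t,x)| ≤ C / sinh(2σt), where ψ(t,x) := (2πσ tanh(2σt))^{-1/2} e^{-x²/(2σ tanh(2σt))}. -/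
/-! With `θ = 2σt`, `a = tanh θ`, `c = cosh θ` one has `a² c² = c² - 1`, and completing the square
gives `e^{-a x²/2σ} e^{-(x/c - y)²/2σa} = e^{-a y²/2σ} e^{-(x - y/c)²/2σa}`. Hence `u - ψ` is
`(2πσa)^{-1/2} / D` times `∫ e^{-a y²/2σ} (e^{-(x - y/c)²/2σa} - e^{-x²/2σa}) u₀(y) dy`, where
`D` is the denominator of `u`. The Lipschitz bound of the Gaussian in `x`, together with the bound on
`|y| e^{-a y²/2σ}`, makes the integrand at most `2 u₀(y) / (a c) = 2 u₀(y) / sinh θ`. For `t ≥ 1`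
the prefactor is bounded uniformly because `tanh 2σ ≤ a ≤ 1`. -/

open MeasureTheory

namespace Real

theorem tanh_mul_cosh (x : ℝ) : tanh x * cosh x = sinh x := by
  rw [tanh_eq_sinh_div_cosh, div_mul_cancel₀ _ (cosh_pos x).ne']

theorem tanh_pos {x : ℝ} (hx : 0 < x) : 0 < tanh x := by
  rw [tanh_eq_sinh_div_cosh]
  exact div_pos (sinh_pos_iff.mpr hx) (cosh_pos x)

theorem tanh_le_tanh {x y : ℝ} (hxy : x ≤ y) : tanh x ≤ tanh y := by
  rwa [← artanh_le_artanh_iff ⟨neg_one_lt_tanh x, tanh_lt_one x⟩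
    ⟨neg_one_lt_tanh y, tanh_lt_one y⟩, artanh_tanh, artanh_tanh]

theorem abs_exp_neg_mul_sq_sub_le {ε : ℝ} (hε : 0 < ε) (p q : ℝ) :
    |exp (-(ε * p ^ 2)) - exp (-(ε * q ^ 2))| ≤ 2 * √ε * |p - q| := by
  have hderiv : ∀ x, HasDerivWithinAt (fun x => exp (-(ε * x ^ 2)))
      (-(2 * ε) * mulExpNegMulSq ε x) Set.univ x := fun x => by
    have := (((hasDerivAt_pow 2 x).const_mul ε).neg).exp
    simp only [Pi.neg_apply] at this
    exact (this.congr_deriv (by rw [mulExpNegSq_apply]; ring_nf)).hasDerivWithinAt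
  have hbound : ∀ x, ‖-(2 * ε) * mulExpNegMulSq ε x‖ ≤ 2 * √ε := fun x => by
    rw [norm_mul, norm_neg, norm_of_nonneg (by positivity), norm_eq_abs]
    calc 2 * ε * |mulExpNegMulSq ε x| ≤ 2 * ε * (√ε)⁻¹ := by
          gcongr; exact abs_mulExpNegMulSq_le hε
      _ = 2 * √ε := by rw [mul_assoc, ← div_eq_mul_inv, div_sqrt]
  simpa [norm_eq_abs] using Convex.norm_image_sub_le_of_norm_hasDerivWithin_le
    (fun x _ => hderiv x) (fun x _ => hbound x) convex_univ (Set.mem_univ q) (Set.mem_univ p)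

theorem exp_neg_mul_sq_mul_abs_exp_sub_le {σ a c : ℝ} (hσ : 0 < σ) (ha : 0 < a) (hc : 0 < c)
    (x y : ℝ) :
    exp (-a * y ^ 2 / (2 * σ))
        * |exp (-(x - y / c) ^ 2 / (2 * σ * a)) - exp (-x ^ 2 / (2 * σ * a))| ≤ 2 / (a * c) := by
  set ε := (2 * σ * a)⁻¹
  set δ := a / (2 * σ)
  have hε : 0 < ε := by positivity
  have hδ : 0 < δ := by positivity
  have hεδ : √ε = √δ / a := by
    rw [show ε = δ / a ^ 2 by simp only [ε, δ]; field_simp, sqrt_div' _ (sq_nonneg a),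
      sqrt_sq ha.le]
  rw [show -a * y ^ 2 / (2 * σ) = -(δ * y * y) by ring,
    show -(x - y / c) ^ 2 / (2 * σ * a) = -(ε * (x - y / c) ^ 2) by ring,
    show -x ^ 2 / (2 * σ * a) = -(ε * x ^ 2) by ring]
  calc exp (-(δ * y * y)) * |exp (-(ε * (x - y / c) ^ 2)) - exp (-(ε * x ^ 2))|
      ≤ exp (-(δ * y * y)) * (2 * √ε * |x - y / c - x|) := by
        gcongr; exact abs_exp_neg_mul_sq_sub_le hε _ _
    _ = 2 * √ε / c * |mulExpNegMulSq δ y| := by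
        rw [mulExpNegSq_apply, sub_sub_cancel_left, abs_neg, abs_mul, abs_div, abs_of_pos hc,
          abs_of_pos (exp_pos _)]
        ring
    _ ≤ 2 * √ε / c * (√δ)⁻¹ := by gcongr; exact abs_mulExpNegMulSq_le hδ
    _ = 2 / (a * c) := by
        rw [hεδ]
        field_simp [(sqrt_pos.mpr hδ).ne']

theorem gaussian_product_swap {σ a c : ℝ} (hσ : σ ≠ 0) (ha : a ≠ 0) (hc : c ≠ 0)
    (hac : a ^ 2 * c ^ 2 = c ^ 2 - 1) (x y : ℝ) :
    exp (-a * x ^ 2 / (2 * σ)) * exp (-(x / c - y) ^ 2 / (2 * σ * a))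
      = exp (-a * y ^ 2 / (2 * σ)) * exp (-(x - y / c) ^ 2 / (2 * σ * a)) := by
  rw [← exp_add, ← exp_add]
  congr 1
  field_simp
  linear_combination (y ^ 2 - x ^ 2) * hac

end Real

open Real

section Integrals

variable {α : Type*} [MeasurableSpace α] {μ : Measure α} {f g : α → ℝ}

theorem MeasureTheory.Integrable.exp_mul_of_nonpos (hf : Integrable f μ)
    (hg : AEStronglyMeasurable g μ) (hg0 : ∀ x, g x ≤ 0) :
    Integrable (fun x => exp (g x) * f x) μ :=
  hf.bdd_mul (continuous_exp.comp_aestronglyMeasurable hg) <| .of_forall fun x => by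
    rw [norm_of_nonneg (exp_pos _).le]; exact exp_le_one_iff.mpr (hg0 x)

theorem integral_exp_mul_pos (hf0 : ∀ x, 0 ≤ f x) (hf : Integrable f μ)
    (hg : AEStronglyMeasurable g μ) (hg0 : ∀ x, g x ≤ 0) (hpos : 0 < ∫ x, f x ∂μ) :
    0 < ∫ x, exp (g x) * f x ∂μ := by
  rw [integral_pos_iff_support_of_nonneg (fun x => mul_nonneg (exp_pos _).le (hf0 x))
    (hf.exp_mul_of_nonpos hg hg0)]
  rw [integral_pos_iff_support_of_nonneg hf0 hf] at hpos
  convert hpos using 2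
  ext x
  simp [(exp_pos (g x)).ne']

end Integrals

noncomputable def gaussMass (σ : ℝ) (u₀ : ℝ → ℝ) (a : ℝ) : ℝ :=
  ∫ y : ℝ, exp (-a * y ^ 2 / (2 * σ)) * u₀ y

section GaussMass

variable {σ a : ℝ} {u₀ : ℝ → ℝ}

theorem neg_mul_sq_div_nonpos (hσ : 0 < σ) (ha : 0 ≤ a) (y : ℝ) : -a * y ^ 2 / (2 * σ) ≤ 0 := by
  rw [neg_mul, neg_div, neg_nonpos]
  positivity

theorem integrable_exp_neg_mul_sq_mul (hσ : 0 < σ) (ha : 0 ≤ a) (hu : Integrable u₀) :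
    Integrable (fun y => exp (-a * y ^ 2 / (2 * σ)) * u₀ y) :=
  hu.exp_mul_of_nonpos (by fun_prop) (neg_mul_sq_div_nonpos hσ ha)

theorem gaussMass_pos (hσ : 0 < σ) (ha : 0 ≤ a) (hnn : ∀ y, 0 ≤ u₀ y) (hu : Integrable u₀)
    (hpos : 0 < ∫ y, u₀ y) : 0 < gaussMass σ u₀ a :=
  integral_exp_mul_pos hnn hu (by fun_prop) (neg_mul_sq_div_nonpos hσ ha) hpos

theorem gaussMass_anti {a' : ℝ} (hσ : 0 < σ) (ha : 0 ≤ a) (haa' : a ≤ a')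
    (hnn : ∀ y, 0 ≤ u₀ y) (hu : Integrable u₀) : gaussMass σ u₀ a' ≤ gaussMass σ u₀ a := by
  refine integral_mono (integrable_exp_neg_mul_sq_mul hσ (ha.trans haa') hu)
    (integrable_exp_neg_mul_sq_mul hσ ha hu) fun y => ?_
  gcongr
  exact hnn y

end GaussMass

theorem abs_uSol_sub_le {σ t : ℝ} {u₀ : ℝ → ℝ} (hσ : 0 < σ) (hnn : ∀ y, 0 ≤ u₀ y)
    (hmass : ∫ y, u₀ y = 1) (ht : 0 < t) (x : ℝ) :
    |uSol σ u₀ t x - (√(2 * π * σ * tanh (2 * σ * t)))⁻¹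
        * exp (-x ^ 2 / (2 * σ * tanh (2 * σ * t)))|
      ≤ 2 * (√(2 * π * σ * tanh (2 * σ * t)))⁻¹
        / (gaussMass σ u₀ (tanh (2 * σ * t)) * sinh (2 * σ * t)) := by
  have hu : Integrable u₀ := .of_integral_ne_zero (by simp [hmass])
  unfold uSol
  set θ := 2 * σ * t
  set a := tanh θ
  set c := cosh θ
  set P := (√(2 * π * σ * a))⁻¹
  have hθ : 0 < θ := by positivity
  have ha : 0 < a := tanh_pos hθ
  have hc : 0 < c := cosh_pos θ
  have hD : 0 < gaussMass σ u₀ a := gaussMass_pos hσ ha.le hnn hu (by simp [hmass])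
  have hP : 0 < P := by positivity
  have hN : Integrable (fun y => exp (-(x / c - y) ^ 2 / (2 * σ * a)) * u₀ y) :=
    hu.exp_mul_of_nonpos (by fun_prop) fun y => by
      rw [neg_div, neg_nonpos]; positivity
  set g : ℝ → ℝ := fun y => exp (-a * y ^ 2 / (2 * σ))
    * (exp (-(x - y / c) ^ 2 / (2 * σ * a)) - exp (-x ^ 2 / (2 * σ * a))) * u₀ y
  have hdiff : exp (-a * x ^ 2 / (2 * σ)) * (∫ y, exp (-(x / c - y) ^ 2 / (2 * σ * a)) * u₀ y)
      - exp (-x ^ 2 / (2 * σ * a)) * gaussMass σ u₀ a = ∫ y, g y := by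
    have hac : a ^ 2 * c ^ 2 = c ^ 2 - 1 := by rw [← mul_pow, tanh_mul_cosh, sinh_sq]
    rw [gaussMass, ← integral_const_mul, ← integral_const_mul, ← integral_sub (hN.const_mul _)
      ((integrable_exp_neg_mul_sq_mul hσ ha.le hu).const_mul _)]
    refine integral_congr_ae (.of_forall fun y => ?_)
    simp only [g]
    rw [← mul_assoc, gaussian_product_swap hσ.ne' ha.ne' hc.ne' hac]
    ring
  have hbound : ‖∫ y, g y‖ ≤ 2 / (a * c) :=
    calc _ ≤ ∫ y, 2 / (a * c) * u₀ y := by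
          refine norm_integral_le_of_norm_le (hu.const_mul _) (.of_forall fun y => ?_)
          rw [norm_mul, norm_mul, norm_of_nonneg (exp_pos _).le, norm_of_nonneg (hnn y),
            norm_eq_abs]
          gcongr
          · exact hnn y
          · exact exp_neg_mul_sq_mul_abs_exp_sub_le hσ ha hc x y
      _ = 2 / (a * c) := by rw [integral_const_mul, hmass, mul_one]
  calc _ = |P * (∫ y, g y) / gaussMass σ u₀ a| := by
        rw [← hdiff]
        change |_ / gaussMass σ u₀ a - _| = _
        congr 1
        field_simp
    _ = P * |∫ y, g y| / gaussMass σ u₀ a := by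
        rw [abs_div, abs_mul, abs_of_pos hP, abs_of_pos hD]
    _ ≤ P * (2 / (a * c)) / gaussMass σ u₀ a := by gcongr; exact hbound
    _ = 2 * P / (gaussMass σ u₀ a * sinh θ) := by
        rw [← show a * c = sinh θ from tanh_mul_cosh θ]
        field_simp

theorem quantitative_convergence_to_fundamental_solution_general
    (σ : ℝ) (hσ : 0 < σ) (u₀ : ℝ → ℝ)
    (hnn : ∀ x, 0 ≤ u₀ x) (hmass : ∫ y : ℝ, u₀ y = 1) :
    ∃ C : ℝ, 0 < C ∧ ∀ t : ℝ, 1 ≤ t → ∀ x : ℝ,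
      |uSol σ u₀ t x
        - (Real.sqrt (2 * Real.pi * σ * Real.tanh (2 * σ * t)))⁻¹
            * Real.exp (-x ^ 2 / (2 * σ * Real.tanh (2 * σ * t)))|
        ≤ C / Real.sinh (2 * σ * t) := by
  have hu : Integrable u₀ := .of_integral_ne_zero (by simp [hmass])
  have ha₀ : 0 < tanh (2 * σ) := tanh_pos (by positivity)
  have hD₁ : 0 < gaussMass σ u₀ 1 := gaussMass_pos hσ zero_le_one hnn hu (by simp [hmass])
  refine ⟨2 * (√(2 * π * σ * tanh (2 * σ)))⁻¹ / gaussMass σ u₀ 1, by positivity,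
    fun t ht x => (abs_uSol_sub_le hσ hnn hmass (by positivity) x).trans ?_⟩
  have hθ : 2 * σ ≤ 2 * σ * t := le_mul_of_one_le_right (by positivity) ht
  have ha : tanh (2 * σ) ≤ tanh (2 * σ * t) := tanh_le_tanh hθ
  have hD : gaussMass σ u₀ 1 ≤ gaussMass σ u₀ (tanh (2 * σ * t)) :=
    gaussMass_anti hσ (ha₀.le.trans ha) (tanh_lt_one _).le hnn hu
  have hs : 0 < sinh (2 * σ * t) := sinh_pos_iff.mpr (by positivity)
  rw [div_div]
  gcongr

theorem quantitative_convergence_to_fundamental_solution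
    (σ : ℝ) (hσ : 0 < σ) (u₀ : ℝ → ℝ) (hmeas : Measurable u₀)
    (hnn : ∀ x, 0 ≤ u₀ x) (hmass : ∫ y : ℝ, u₀ y = 1) :
    ∃ C : ℝ, 0 < C ∧ ∀ t : ℝ, 1 ≤ t → ∀ x : ℝ,
      |uSol σ u₀ t x
        - (Real.sqrt (2 * Real.pi * σ * Real.tanh (2 * σ * t)))⁻¹
            * Real.exp (-x ^ 2 / (2 * σ * Real.tanh (2 * σ * t)))|
        ≤ C / Real.sinh (2 * σ * t) :=
  quantitative_convergence_to_fundamental_solution_general σ hσ u₀ hnn hmass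
end

section
/- Renormalization transform: let σ > 0, T ∈ (0, ∞], and let v : ℝ × ℝ → ℝ be continuous and nonnegative, with v differentiable in t and twice differentiable in x on (0,T) × ℝ, satisfying ∂_t v = σ² ∂_xx v - x² v there. Assume that for each t ∈ [0,T) the function x ↦ (1 + x²) v(t,x) is Lebesgue integrable, that t ↦ ∫_ℝ x² v(t,x) dx is continuous on [0,T), and that D(t) := 1 - ∫₀ᵗ ∫_ℝ x² v(s,x) dx ds > 0 for all t ∈ [0,T). Then u(t,x) := v(t,x)/D(t) satisfies the nonlocal equation ∂_t u(t,x) = σ² ∂_xx u(t,x) + (-x² + ∫_ℝ y² u(t,y) dy) u(t,x) for all (t,x) ∈ (0,T) × ℝ. -/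
/-!
Since `D(t) = 1 - ∫₀ᵗ M` with `M(s) = ∫ x² v(s,x) dx` continuous, the fundamental theorem of
calculus gives `D' = -M`. The quotient rule then turns `∂_t v = σ² ∂_xx v - x² v` into
`∂_t (v/D) = σ² ∂_xx (v/D) - x² (v/D) + (M/D) (v/D)`, and `M/D = ∫ y² (v/D)(t,y) dy`
because `D(t)` does not depend on `y`.
-/

open MeasureTheory Topology Set

theorem deriv_deriv_div_const {𝕜 : Type*} [NontriviallyNormedField 𝕜] (f : 𝕜 → 𝕜) (c x : 𝕜) :
    deriv (deriv fun y => f y / c) x = deriv (deriv f) x / c := by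
  simp only [funext fun y => deriv_div_const (c := f) (x := y) c, deriv_div_const]

theorem hasDerivAt_intervalIntegral_of_continuousOn {f : ℝ → ℝ} {s : Set ℝ} {a t : ℝ}
    (hf : ContinuousOn f s) (has : uIcc a t ⊆ s) (hs : s ∈ 𝓝 t) :
    HasDerivAt (fun u => ∫ r in a..u, f r) (f t) t :=
  intervalIntegral.integral_hasDerivAt_right (hf.mono has).intervalIntegrable
    ((hf.mono interior_subset).stronglyMeasurableAtFilter isOpen_interior t
      (mem_interior_iff_mem_nhds.mpr hs))
    (hf.continuousAt hs)

theorem HasDerivAt.div_of_hasDerivAt_neg {f D : ℝ → ℝ} {f' m t : ℝ} (hf : HasDerivAt f f' t)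
    (hD : HasDerivAt D (-m) t) (hDt : D t ≠ 0) :
    HasDerivAt (fun s => f s / D s) (f' / D t + m / D t * (f t / D t)) t :=
  (hf.div hD hDt).congr_deriv (by field_simp; ring)

theorem setOf_nonneg_and_coe_lt_mem_nhds {T : EReal} {t : ℝ} (ht : 0 < t)
    (htT : (t : EReal) < T) : {s : ℝ | 0 ≤ s ∧ (s : EReal) < T} ∈ 𝓝 t :=
  Filter.inter_mem (Ici_mem_nhds ht)
    ((isOpen_Iio.preimage continuous_coe_real_ereal).mem_nhds htT)

theorem uIcc_zero_subset_setOf_nonneg_and_coe_lt {T : EReal} {t : ℝ} (ht : 0 ≤ t)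
    (htT : (t : EReal) < T) : uIcc 0 t ⊆ {s : ℝ | 0 ≤ s ∧ (s : EReal) < T} := by
  rw [uIcc_of_le ht]
  exact fun s hs => ⟨hs.1, (EReal.coe_le_coe_iff.mpr hs.2).trans_lt htT⟩

theorem renormalization_transform_neg_quadratic_general
    (σ : ℝ) (T : EReal) (v : ℝ → ℝ → ℝ)
    (hv_t : ∀ t : ℝ, 0 < t → (t : EReal) < T → ∀ x : ℝ,
      DifferentiableAt ℝ (fun s => v s x) t)
    (hv_pde : ∀ t : ℝ, 0 < t → (t : EReal) < T → ∀ x : ℝ,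
      deriv (fun s => v s x) t
        = σ ^ 2 * deriv (deriv (v t)) x - x ^ 2 * v t x)
    (hM_cont : ContinuousOn (fun t : ℝ => ∫ x : ℝ, x ^ 2 * v t x)
      {t : ℝ | 0 ≤ t ∧ (t : EReal) < T})
    (hD_pos : ∀ t : ℝ, 0 ≤ t → (t : EReal) < T →
      0 < 1 - ∫ s in (0 : ℝ)..t, ∫ x : ℝ, x ^ 2 * v s x) :
    ∀ t : ℝ, 0 < t → (t : EReal) < T → ∀ x : ℝ,
      deriv (fun s => v s x / (1 - ∫ r in (0 : ℝ)..s, ∫ z : ℝ, z ^ 2 * v r z)) t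
        = σ ^ 2 * deriv (deriv (fun y =>
            v t y / (1 - ∫ r in (0 : ℝ)..t, ∫ z : ℝ, z ^ 2 * v r z))) x
          + (-x ^ 2 + ∫ y : ℝ,
              y ^ 2 * (v t y / (1 - ∫ r in (0 : ℝ)..t, ∫ z : ℝ, z ^ 2 * v r z)))
            * (v t x / (1 - ∫ r in (0 : ℝ)..t, ∫ z : ℝ, z ^ 2 * v r z)) := by
  intro t ht htT x
  have hM : HasDerivAt (fun s => ∫ r in (0 : ℝ)..s, ∫ z : ℝ, z ^ 2 * v r z)
      (∫ z : ℝ, z ^ 2 * v t z) t :=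
    hasDerivAt_intervalIntegral_of_continuousOn hM_cont
      (uIcc_zero_subset_setOf_nonneg_and_coe_lt ht.le htT) (setOf_nonneg_and_coe_lt_mem_nhds ht htT)
  have hquot := (hv_t t ht htT x).hasDerivAt.div_of_hasDerivAt_neg
    (hM.const_sub 1) (hD_pos t ht.le htT).ne'
  simp only [mul_div_assoc', integral_div]
  rw [hquot.deriv, deriv_deriv_div_const, hv_pde t ht htT x]
  ring

theorem renormalization_transform_neg_quadratic
    (σ : ℝ) (hσ : 0 < σ) (T : EReal) (hT : 0 < T) (v : ℝ → ℝ → ℝ)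
    (hv_cont : Continuous fun p : ℝ × ℝ => v p.1 p.2)
    (hv_nonneg : ∀ t x : ℝ, 0 ≤ v t x)
    (hv_t : ∀ t : ℝ, 0 < t → (t : EReal) < T → ∀ x : ℝ,
      DifferentiableAt ℝ (fun s => v s x) t)
    (hv_x : ∀ t : ℝ, 0 < t → (t : EReal) < T → ∀ x : ℝ,
      DifferentiableAt ℝ (v t) x ∧ DifferentiableAt ℝ (deriv (v t)) x)
    (hv_pde : ∀ t : ℝ, 0 < t → (t : EReal) < T → ∀ x : ℝ,
      deriv (fun s => v s x) t
        = σ ^ 2 * deriv (deriv (v t)) x - x ^ 2 * v t x)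
    (hv_int : ∀ t : ℝ, 0 ≤ t → (t : EReal) < T →
      Integrable (fun x : ℝ => (1 + x ^ 2) * v t x))
    (hM_cont : ContinuousOn (fun t : ℝ => ∫ x : ℝ, x ^ 2 * v t x)
      {t : ℝ | 0 ≤ t ∧ (t : EReal) < T})
    (hD_pos : ∀ t : ℝ, 0 ≤ t → (t : EReal) < T →
      0 < 1 - ∫ s in (0 : ℝ)..t, ∫ x : ℝ, x ^ 2 * v s x) :
    ∀ t : ℝ, 0 < t → (t : EReal) < T → ∀ x : ℝ,
      deriv (fun s => v s x / (1 - ∫ r in (0 : ℝ)..s, ∫ z : ℝ, z ^ 2 * v r z)) t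
        = σ ^ 2 * deriv (deriv (fun y =>
            v t y / (1 - ∫ r in (0 : ℝ)..t, ∫ z : ℝ, z ^ 2 * v r z))) x
          + (-x ^ 2 + ∫ y : ℝ,
              y ^ 2 * (v t y / (1 - ∫ r in (0 : ℝ)..t, ∫ z : ℝ, z ^ 2 * v r z)))
            * (v t x / (1 - ∫ r in (0 : ℝ)..t, ∫ z : ℝ, z ^ 2 * v r z)) :=
  renormalization_transform_neg_quadratic_general σ T v hv_t hv_pde hM_cont hD_pos
end

section
/- Quantitative large-time asymptotics for the heat semigroup: there exists an absolute constant C > 0 such that for every Lebesgue-measurable u₀ : ℝ → ℝ with u₀ ≥ 0 and ∫_ℝ (1 + |x|) u₀(x) dx < ∞, and for every t > 0, sup_{x ∈ ℝ} | (4πt)^{-1/2} ∫_ℝ e^{-(x-y)²/(4t)} u₀(y) dy − (∫_ℝ u₀(y) dy) (4πt)^{-1/2} e^{-x²/(4t)} | ≤ (C/t) ∫_ℝ |y| u₀(y) dy. -/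
/-!
Write `G(s) = exp (-s² / (4t))`. Subtracting the mass term turns the difference into
`(4πt)^(-1/2) ∫ (G (x - y) - G x) u₀ y dy`. Since `|G'(s)| = |s| G(s) / (2t) ≤ (4t)^(-1/2)`,
`G` is `(4t)^(-1/2)`-Lipschitz, so the integrand is at most `(4t)^(-1/2) |y| u₀ y`, and the
prefactors combine to `(4πt)^(-1/2) (4t)^(-1/2) = 1 / (4 √π t)`.
-/

open MeasureTheory Real
open scoped NNReal

lemma two_mul_abs_mul_exp_neg_mul_sq_le {c : ℝ} (hc : 0 ≤ c) (s : ℝ) :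
    2 * c * |s| * exp (-c * s ^ 2) ≤ √c := by
  -- AM-GM gives `2 √c |s| ≤ 1 + c s² ≤ exp (c s²)`.
  have am_gm : 2 * √c * |s| ≤ c * s ^ 2 + 1 := by
    nlinarith [sq_nonneg (√c * |s| - 1), Real.sq_sqrt hc, sq_abs s]
  have key : 2 * c * |s| ≤ √c * exp (c * s ^ 2) := by
    calc 2 * c * |s| = √c * (2 * √c * |s|) := by
          linear_combination -(2 * |s|) * Real.mul_self_sqrt hc
      _ ≤ √c * exp (c * s ^ 2) :=
          mul_le_mul_of_nonneg_left (am_gm.trans (add_one_le_exp _)) (Real.sqrt_nonneg c)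
  calc 2 * c * |s| * exp (-c * s ^ 2) ≤ √c * exp (c * s ^ 2) * exp (-c * s ^ 2) :=
        mul_le_mul_of_nonneg_right key (exp_pos _).le
    _ = √c := by rw [mul_assoc, ← exp_add, neg_mul, add_neg_cancel, exp_zero, mul_one]

lemma lipschitzWith_exp_neg_mul_sq (c : ℝ≥0) :
    LipschitzWith (NNReal.sqrt c) fun s : ℝ => exp (-c * s ^ 2) := by
  have hderiv (s : ℝ) : HasDerivAt (fun s : ℝ => exp (-c * s ^ 2))
      (exp (-c * s ^ 2) * (-c * (2 * s))) s := by
    simpa using ((hasDerivAt_pow 2 s).const_mul (-(c : ℝ))).exp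
  refine lipschitzOnWith_univ.1 <| convex_univ.lipschitzOnWith_of_nnnorm_hasDerivWithin_le
    (fun s _ => (hderiv s).hasDerivWithinAt) fun s _ => ?_
  rw [← NNReal.coe_le_coe, coe_nnnorm, Real.coe_sqrt, Real.norm_eq_abs]
  calc |exp (-c * s ^ 2) * (-c * (2 * s))| = 2 * c * |s| * exp (-c * s ^ 2) := by
        rw [abs_mul, abs_of_pos (exp_pos _), abs_mul, abs_neg, abs_mul, NNReal.abs_eq,
          abs_two]
        ring
    _ ≤ √c := two_mul_abs_mul_exp_neg_mul_sq_le c.2 s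

lemma LipschitzWith.abs_integral_comp_sub_mul_sub_le {f : ℝ → ℝ} {K : ℝ≥0}
    (hf : LipschitzWith K f) {u : ℝ → ℝ} (hu : Integrable u)
    (hyu : Integrable fun y => y * u y) (x : ℝ) :
    |(∫ y, f (x - y) * u y) - f x * ∫ y, u y| ≤ K * ∫ y, |y * u y| := by
  have hbound (y : ℝ) : ‖(f (x - y) - f x) * u y‖ ≤ K * |y * u y| := by
    have hlip := hf.dist_le_mul (x - y) x
    rw [Real.dist_eq, Real.dist_eq, sub_sub_cancel_left, abs_neg] at hlip
    rw [Real.norm_eq_abs, abs_mul, abs_mul, ← mul_assoc]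
    exact mul_le_mul_of_nonneg_right hlip (abs_nonneg _)
  have hdiff : Integrable fun y => (f (x - y) - f x) * u y :=
    (hyu.abs.const_mul K).mono'
      (((hf.continuous.comp (continuous_sub_left x)).sub continuous_const).aestronglyMeasurable.mul
        hu.1)
      (ae_of_all _ hbound)
  have hsplit : ∫ y, f (x - y) * u y = (∫ y, (f (x - y) - f x) * u y) + f x * ∫ y, u y := by
    rw [← integral_const_mul, ← integral_add hdiff (hu.const_mul _)]
    simp only [sub_mul, sub_add_cancel]
  rw [hsplit, add_sub_cancel_right, ← integral_const_mul, ← Real.norm_eq_abs]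
  exact norm_integral_le_of_norm_le (hyu.abs.const_mul K) (ae_of_all _ hbound)

lemma integrable_of_integrable_one_add_abs_mul {u : ℝ → ℝ} (hu : AEStronglyMeasurable u)
    (h : Integrable fun x => (1 + |x|) * u x) :
    Integrable u ∧ Integrable fun x => x * u x := by
  have hweight (x : ℝ) : ‖(1 + |x|) * u x‖ = (1 + |x|) * ‖u x‖ := by
    rw [norm_mul, Real.norm_of_nonneg (by positivity)]
  refine ⟨h.mono hu (ae_of_all _ fun x => ?_),
    h.mono (continuous_id.aestronglyMeasurable.mul hu) (ae_of_all _ fun x => ?_)⟩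
  · rw [hweight]
    exact le_mul_of_one_le_left (norm_nonneg _) (le_add_of_nonneg_right (abs_nonneg x))
  · rw [hweight, norm_mul, Real.norm_eq_abs]
    exact mul_le_mul_of_nonneg_right (le_add_of_nonneg_left zero_le_one) (norm_nonneg _)

theorem quantitative_large_time_asymptotics_heat_semigroup :
    ∃ C : ℝ, 0 < C ∧ ∀ u₀ : ℝ → ℝ, Measurable u₀ → (∀ x, 0 ≤ u₀ x) →
      Integrable (fun x : ℝ => (1 + |x|) * u₀ x) →
      ∀ t : ℝ, 0 < t → ∀ x : ℝ,
        |(Real.sqrt (4 * Real.pi * t))⁻¹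
            * (∫ y : ℝ, Real.exp (-(x - y) ^ 2 / (4 * t)) * u₀ y)
          - (∫ y : ℝ, u₀ y) * (Real.sqrt (4 * Real.pi * t))⁻¹ * Real.exp (-x ^ 2 / (4 * t))|
          ≤ C / t * ∫ y : ℝ, |y| * u₀ y := by
  refine ⟨(4 * √π)⁻¹, by positivity, fun u₀ hmeas hpos hint t ht x => ?_⟩
  obtain ⟨hu, hyu⟩ := integrable_of_integrable_one_add_abs_mul hmeas.aestronglyMeasurable hint
  obtain ⟨c, hc⟩ : ∃ c : ℝ≥0, (c : ℝ) = (4 * t)⁻¹ := ⟨⟨_, by positivity⟩, rfl⟩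
  have hgauss (s : ℝ) : exp (-s ^ 2 / (4 * t)) = exp (-c * s ^ 2) := by
    rw [hc]; congr 1; ring
  have hconst : (√(4 * π * t))⁻¹ * √(c : ℝ) = (4 * √π)⁻¹ / t := by
    rw [hc, ← Real.sqrt_inv, ← Real.sqrt_mul (by positivity),
      Real.sqrt_eq_iff_mul_self_eq_of_pos (by positivity)]
    field_simp
    rw [Real.sq_sqrt pi_pos.le]
  have hbound := (lipschitzWith_exp_neg_mul_sq c).abs_integral_comp_sub_mul_sub_le hu hyu x
  simp only [hgauss]
  calc _ = |(√(4 * π * t))⁻¹ * ((∫ y, exp (-c * (x - y) ^ 2) * u₀ y)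
          - exp (-c * x ^ 2) * ∫ y, u₀ y)| := by
        congr 1; ring
    _ = (√(4 * π * t))⁻¹ * |(∫ y, exp (-c * (x - y) ^ 2) * u₀ y)
          - exp (-c * x ^ 2) * ∫ y, u₀ y| := by
        rw [abs_mul, abs_of_pos (by positivity)]
    _ ≤ (√(4 * π * t))⁻¹ * (√(c : ℝ) * ∫ y, |y * u₀ y|) := by
        rw [Real.coe_sqrt] at hbound
        gcongr
    _ = (4 * √π)⁻¹ / t * ∫ y : ℝ, |y| * u₀ y := by
        simp only [abs_mul, abs_of_nonneg (hpos _)]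
        rw [← mul_assoc, hconst]
end
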